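/- Let 1 ≤ q < ∞ and let X be a real Banach space with a Schauder basis (e_n)_{n∈ℕ}. If X contains an isomorphic copy of ℓ_q, then there exists a block basic sequence with respect to (e_n) that is equivalent to the canonical basis of ℓ_q. -/

import Mathlib

open scoped BigOperators

/-- `e` is a Schauder basis of `X`: every vector has a unique expansion as a norm-convergent
series `∑ n, a n • e n` (partial sums over `Finset.range N`). -/
def IsSchauderBasis {X : Type*} [NormedAddCommGroup X] [NormedSpace ℝ X] (e : ℕ → X) : Prop :=
  ∀ x : X, ∃! a : ℕ → ℝ,
    Filter.Tendsto (fun N => ∑ n ∈ Finset.range N, a n • e n) Filter.atTop (nhds x)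

/-- `u` is a block basic sequence with respect to `e`. -/
def IsBlockBasic {X : Type*} [NormedAddCommGroup X] [NormedSpace ℝ X]
    (e : ℕ → X) (u : ℕ → X) : Prop :=
  ∃ (A : ℕ → Finset ℕ) (a : ℕ → ℝ),
    (∀ j, (A j).Nonempty) ∧
    (∀ j, ∀ m ∈ A j, ∀ k ∈ A (j + 1), m < k) ∧
    (∀ j, u j = ∑ n ∈ A j, a n • e n)

/-- A sequence is semi-normalized if its norms are bounded away from zero and from infinity. -/
def SemiNormalized {X : Type*} [NormedAddCommGroup X] (u : ℕ → X) : Prop :=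
  ∃ c C : ℝ, 0 < c ∧ ∀ j, c ≤ ‖u j‖ ∧ ‖u j‖ ≤ C

/-- Two sequences (possibly in different spaces) are equivalent. -/
def SeqEquiv {X Y : Type*} [NormedAddCommGroup X] [NormedSpace ℝ X]
    [NormedAddCommGroup Y] [NormedSpace ℝ Y] (u : ℕ → X) (w : ℕ → Y) : Prop :=
  ∃ C : ℝ, 1 ≤ C ∧ ∀ (a : ℕ → ℝ) (s : Finset ℕ),
    C⁻¹ * ‖∑ j ∈ s, a j • w j‖ ≤ ‖∑ j ∈ s, a j • u j‖ ∧
    ‖∑ j ∈ s, a j • u j‖ ≤ C * ‖∑ j ∈ s, a j • w j‖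

/-- A bounded linear operator is compact if the image of the closed unit ball is
relatively compact. -/
def CompactOp {X Y : Type*} [NormedAddCommGroup X] [NormedSpace ℝ X]
    [NormedAddCommGroup Y] [NormedSpace ℝ Y] (T : Y →L[ℝ] X) : Prop :=
  IsCompact (closure (T '' Metric.closedBall 0 1))

/-- `e` is an unconditional basis of `X`. -/
def IsUncondBasis {X : Type*} [NormedAddCommGroup X] [NormedSpace ℝ X] (e : ℕ → X) : Prop :=
  (∀ n, e n ≠ 0) ∧ ∀ x : X, ∃! a : ℕ → ℝ, HasSum (fun n => a n • e n) x

/-- `u` is disjointly finitely supported with respect to `e`. -/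
def DisjSupported {X : Type*} [NormedAddCommGroup X] [NormedSpace ℝ X]
    (e : ℕ → X) (u : ℕ → X) : Prop :=
  ∃ A : ℕ → Finset ℕ, Pairwise (Function.onFun Disjoint A) ∧
    ∀ j, u j ∈ Submodule.span ℝ (e '' (A j : Set ℕ))

/-- The basis `e` satisfies a lower `q`-estimate. -/
def LowerEstimate {X : Type*} [NormedAddCommGroup X] [NormedSpace ℝ X]
    (e : ℕ → X) (q : ℝ) : Prop :=
  ∃ C : ℝ, 0 < C ∧ ∀ (m : ℕ) (f : Fin m → X) (A : Fin m → Finset ℕ),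
    Pairwise (Function.onFun Disjoint A) →
    (∀ i, f i ∈ Submodule.span ℝ (e '' (A i : Set ℕ))) →
    (∑ i, ‖f i‖ ^ q) ^ (1 / q) ≤ C * ‖∑ i, f i‖

/-- The basis `e` satisfies an upper `q`-estimate. -/
def UpperEstimate {X : Type*} [NormedAddCommGroup X] [NormedSpace ℝ X]
    (e : ℕ → X) (q : ℝ) : Prop :=
  ∃ C : ℝ, 0 < C ∧ ∀ (m : ℕ) (f : Fin m → X) (A : Fin m → Finset ℕ),
    Pairwise (Function.onFun Disjoint A) →
    (∀ i, f i ∈ Submodule.span ℝ (e '' (A i : Set ℕ))) →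
    ‖∑ i, f i‖ ≤ C * (∑ i, ‖f i‖ ^ q) ^ (1 / q)

/-- `u` is equivalent to the canonical basis of `ℓ_q`. -/
def EquivCanonLq {X : Type*} [NormedAddCommGroup X] [NormedSpace ℝ X]
    (u : ℕ → X) (q : ℝ) : Prop :=
  ∃ C : ℝ, 1 ≤ C ∧ ∀ (a : ℕ → ℝ) (s : Finset ℕ),
    C⁻¹ * (∑ j ∈ s, |a j| ^ q) ^ (1 / q) ≤ ‖∑ j ∈ s, a j • u j‖ ∧
    ‖∑ j ∈ s, a j • u j‖ ≤ C * (∑ j ∈ s, |a j| ^ q) ^ (1 / q)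

/-- `Z` contains an isomorphic copy of `ℓ_q`: there is a bounded linear map `J : ℓ_q → Z`
which is bounded below. -/
def ContainsLp (Z : Type*) [NormedAddCommGroup Z] [NormedSpace ℝ Z] (q : ℝ) : Prop :=
  ∃ (J : lp (fun _ : ℕ => ℝ) (ENNReal.ofReal q) →ₗ[ℝ] Z) (C c : ℝ), 0 < c ∧
    ∀ f, ‖J f‖ ≤ C * ‖f‖ ∧ c * ‖f‖ ≤ ‖J f‖

/-- `T` is strictly singular: it is bounded below on no infinite-dimensional subspace. -/
def StrictlySingular {X Y : Type*} [NormedAddCommGroup X] [NormedSpace ℝ X]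
    [NormedAddCommGroup Y] [NormedSpace ℝ Y] (T : Y →L[ℝ] X) : Prop :=
  ∀ (Z : Submodule ℝ Y) (c : ℝ), 0 < c → (∀ z ∈ Z, c * ‖z‖ ≤ ‖T z‖) →
    FiniteDimensional ℝ Z

/-- A finite family of Banach spaces is splitting for unconditional bases. -/
def SplittingFamily {ι : Type*} [Fintype ι] (Z : ι → Type*)
    [∀ i, NormedAddCommGroup (Z i)] [∀ i, NormedSpace ℝ (Z i)] : Prop :=
  ∀ w : ℕ → (∀ i, Z i), IsUncondBasis w →
    ∃ N : ι → Set ℕ, Pairwise (Function.onFun Disjoint N) ∧ (⋃ i, N i) = Set.univ ∧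
      ∀ i, Nonempty ((Submodule.span ℝ (w '' N i)).topologicalClosure ≃L[ℝ] Z i)

/-- A pair of Banach spaces is splitting for unconditional bases. -/
def SplittingPair (U V : Type*) [NormedAddCommGroup U] [NormedSpace ℝ U]
    [NormedAddCommGroup V] [NormedSpace ℝ V] : Prop :=
  ∀ w : ℕ → U × V, IsUncondBasis w →
    ∃ N₁ N₂ : Set ℕ, Disjoint N₁ N₂ ∧ N₁ ∪ N₂ = Set.univ ∧
      Nonempty ((Submodule.span ℝ (w '' N₁)).topologicalClosure ≃L[ℝ] U) ∧
      Nonempty ((Submodule.span ℝ (w '' N₂)).topologicalClosure ≃L[ℝ] V)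

/-- `U` has a unique, up to equivalence and permutation, unconditional basis. -/
def HasUTAPBasis (U : Type*) [NormedAddCommGroup U] [NormedSpace ℝ U] : Prop :=
  ∃ e : ℕ → U, IsUncondBasis e ∧ SemiNormalized e ∧
    ∀ f : ℕ → U, IsUncondBasis f → SemiNormalized f →
      ∃ π : Equiv.Perm ℕ, SeqEquiv (fun n => f (π n)) e

/-- `y` is a subsymmetric basic sequence: semi-normalized, an unconditional basis of its
closed linear span, and equivalent to all of its subsequences. -/
def IsSubsymmetric {X : Type*} [NormedAddCommGroup X] [NormedSpace ℝ X] (y : ℕ → X) : Prop :=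
  SemiNormalized y ∧ (∀ n, y n ≠ 0) ∧
  (∀ x : X, x ∈ (Submodule.span ℝ (Set.range y)).topologicalClosure →
    ∃! a : ℕ → ℝ, HasSum (fun n => a n • y n) x) ∧
  ∀ k : ℕ → ℕ, StrictMono k → SeqEquiv (fun n => y (k n)) y

/-!
The coordinate functionals of a Schauder basis of a Banach space are continuous: the partial-sum
sequences form a closed subspace of `ℓ^∞(ℕ, X)` mapped bijectively onto `X` by taking limits, so
the open mapping theorem applies. If `J : ℓ_q → X` is an embedding, the coordinates of `J δ_k` are
bounded, hence some subsequence has coordinatewise convergent expansions, and the differences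
`y_j = J (δ_{φ (2j+1)} - δ_{φ (2j)})` have coordinatewise null expansions. Disjointness of the
supports makes every subsequence of `(y_j)` equivalent to the unit vector basis of `ℓ_q`. A gliding
hump gives a subsequence `y_{k_j}` and a block basic sequence `u_j` with
`∑ ‖u_j - y_{k_j}‖ < c / 2`, and so small a perturbation keeps the `ℓ_q` estimates.
-/

open Filter Finset
open scoped Topology ENNReal lp

section PartialSumSequences

variable {X : Type*} [NormedAddCommGroup X]

lemma lp.isClosed_setOf_cauchySeq : IsClosed {g : ℓ^∞(ℕ, X) | CauchySeq ⇑g} := by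
  refine isClosed_of_closure_subset fun g hg => Metric.cauchySeq_iff.2 fun ε hε => ?_
  obtain ⟨h, hh, hgh⟩ := Metric.mem_closure_iff.1 hg (ε / 3) (by positivity)
  obtain ⟨B, hB⟩ := Metric.cauchySeq_iff.1 (show CauchySeq ⇑h from hh) (ε / 3) (by positivity)
  have hclose : ∀ n, dist (g n) (h n) < ε / 3 :=
    fun n => ((lp.lipschitzWith_one_eval ∞ n).dist_le_mul g h).trans_lt (by simpa using hgh)
  refine ⟨B, fun m hm n hn => ?_⟩
  calc dist (g m) (g n) ≤ dist (g m) (h m) + dist (h m) (h n) + dist (h n) (g n) :=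
        dist_triangle4 _ _ _ _
    _ < ε / 3 + ε / 3 + ε / 3 := by
        gcongr
        · exact hclose m
        · exact hB m hm n hn
        · exact dist_comm (g n) (h n) ▸ hclose n
    _ = ε := by ring

variable [NormedSpace ℝ X] (e : ℕ → X)

/-- The Cauchy sequences of partial sums `N ↦ ∑ n < N, a n • e n`, inside `ℓ^∞`. -/
def partialSumSeqs : Submodule ℝ ℓ^∞(ℕ, X) where
  carrier := {g | CauchySeq ⇑g ∧ g 0 = 0 ∧ ∀ N, g (N + 1) - g N ∈ ℝ ∙ e N}
  add_mem' := by
    rintro g h ⟨hg, hg0, hge⟩ ⟨hh, hh0, hhe⟩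
    refine ⟨by rw [lp.coeFn_add]; exact hg.add hh, by simp [hg0, hh0], fun N => ?_⟩
    simpa [add_sub_add_comm] using add_mem (hge N) (hhe N)
  zero_mem' := ⟨by rw [lp.coeFn_zero]; exact cauchySeq_const (0 : X), by simp, fun N => by simp⟩
  smul_mem' := by
    rintro c g ⟨hg, hg0, hge⟩
    refine ⟨by rw [lp.coeFn_smul]; exact (uniformContinuous_const_smul c).comp_cauchySeq hg,
      by simp [hg0], fun N => ?_⟩
    simpa [smul_sub] using Submodule.smul_mem _ c (hge N)

lemma isClosed_partialSumSeqs : IsClosed (partialSumSeqs e : Set ℓ^∞(ℕ, X)) := by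
  have hev : ∀ n, Continuous fun g : ℓ^∞(ℕ, X) => g n :=
    fun n => (lp.lipschitzWith_one_eval ∞ n).continuous
  show IsClosed {g : ℓ^∞(ℕ, X) | _ ∧ _ ∧ ∀ N, _}
  simp only [Set.ofPred_and, Set.ofPred_forall]
  exact lp.isClosed_setOf_cauchySeq.inter ((isClosed_singleton.preimage (hev 0)).inter
    (isClosed_iInter fun N =>
      (ℝ ∙ e N).closed_of_finiteDimensional.preimage ((hev (N + 1)).sub (hev N))))

lemma exists_eq_sum_of_mem_partialSumSeqs (g : partialSumSeqs e) :
    ∃ a : ℕ → ℝ, ∀ N, (g : ℓ^∞(ℕ, X)) N = ∑ n ∈ range N, a n • e n := by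
  choose a ha using fun N => Submodule.mem_span_singleton.1 (g.2.2.2 N)
  refine ⟨a, fun N => ?_⟩
  induction N with
  | zero => simpa using g.2.2.1
  | succ N ih => rw [sum_range_succ, ← ih, ha N, add_sub_cancel]

variable [CompleteSpace X]

instance : CompleteSpace (partialSumSeqs e) := (isClosed_partialSumSeqs e).completeSpace_coe

namespace partialSumSeqs

lemma tendsto_limUnder (g : partialSumSeqs e) :
    Tendsto ⇑(g : ℓ^∞(ℕ, X)) atTop (𝓝 (limUnder atTop ⇑(g : ℓ^∞(ℕ, X)))) :=
  g.2.1.tendsto_limUnder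

noncomputable def limitCLM : partialSumSeqs e →L[ℝ] X :=
  LinearMap.mkContinuous
    { toFun g := limUnder atTop ⇑(g : ℓ^∞(ℕ, X))
      map_add' g h := ((tendsto_limUnder e g).add (tendsto_limUnder e h)).limUnder_eq
      map_smul' c g := ((tendsto_limUnder e g).const_smul c).limUnder_eq }
    1 fun g => le_of_tendsto (tendsto_limUnder e g).norm (Eventually.of_forall fun N => by
      simpa using lp.norm_apply_le_norm ENNReal.top_ne_zero (g : ℓ^∞(ℕ, X)) N)

lemma tendsto_limitCLM (g : partialSumSeqs e) :
    Tendsto ⇑(g : ℓ^∞(ℕ, X)) atTop (𝓝 (limitCLM e g)) :=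
  tendsto_limUnder e g

end partialSumSeqs

end PartialSumSequences

lemma tendsto_sum_range_single_smul {X : Type*} [NormedAddCommGroup X] [NormedSpace ℝ X]
    {e : ℕ → X} (j : ℕ) :
    Tendsto (fun N => ∑ n ∈ range N, (Pi.single j 1 : ℕ → ℝ) n • e n) atTop (𝓝 (e j)) := by
  refine tendsto_const_nhds.congr' ((eventually_gt_atTop j).mono fun N hN => ?_)
  simp only
  rw [sum_eq_single_of_mem j (mem_range.2 hN) fun n _ hn => by simp [hn]]
  simp

namespace IsSchauderBasis

variable {X : Type*} [NormedAddCommGroup X] [NormedSpace ℝ X] {e : ℕ → X} (he : IsSchauderBasis e)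
include he

lemma ne_zero (n : ℕ) : e n ≠ 0 := by
  intro h
  have h0 : Tendsto (fun N => ∑ m ∈ range N, (0 : ℕ → ℝ) m • e m) atTop (𝓝 0) := by simp
  have h1 := tendsto_sum_range_single_smul (e := e) n
  rw [h] at h1
  have := congr_fun ((he 0).unique h1 h0) n
  simp at this

variable [CompleteSpace X]

lemma limitCLM_bijective : Function.Bijective (partialSumSeqs.limitCLM e) := by
  refine ⟨fun g h hgh => ?_, fun x => ?_⟩
  · obtain ⟨a, ha⟩ := exists_eq_sum_of_mem_partialSumSeqs e g
    obtain ⟨b, hb⟩ := exists_eq_sum_of_mem_partialSumSeqs e h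
    have hab : a = b := (he _).unique
      ((partialSumSeqs.tendsto_limitCLM e g).congr ha)
      (hgh ▸ (partialSumSeqs.tendsto_limitCLM e h).congr hb)
    exact Subtype.ext (lp.ext (funext fun N => by rw [ha, hb, hab]))
  · obtain ⟨a, ha⟩ := (he x).exists
    let s : ℓ^∞(ℕ, X) := ⟨fun N => ∑ n ∈ range N, a n • e n,
      memℓp_infty ha.norm.isBoundedUnder_le.bddAbove_range⟩
    have hs : s ∈ partialSumSeqs e := ⟨ha.cauchySeq, by simp [s], fun N =>
      Submodule.mem_span_singleton.2 ⟨a N, by simp [s, sum_range_succ]⟩⟩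
    exact ⟨⟨s, hs⟩, tendsto_nhds_unique (partialSumSeqs.tendsto_limitCLM e ⟨s, hs⟩) ha⟩

noncomputable def partialSums : X ≃L[ℝ] partialSumSeqs e :=
  (ContinuousLinearEquiv.ofBijective (partialSumSeqs.limitCLM e)
    (LinearMap.ker_eq_bot.2 he.limitCLM_bijective.1)
    (LinearMap.range_eq_top.2 he.limitCLM_bijective.2)).symm

lemma tendsto_partialSums (x : X) :
    Tendsto ⇑(he.partialSums x : ℓ^∞(ℕ, X)) atTop (𝓝 x) := by
  simpa [partialSums] using partialSumSeqs.tendsto_limitCLM e (he.partialSums x)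

noncomputable def coord (n : ℕ) : X →L[ℝ] ℝ :=
  ContinuousLinearEquiv.coord ℝ (e n) (he.ne_zero n) ∘L
    (((lp.evalCLM ℝ (fun _ => X) ∞ (n + 1) - lp.evalCLM ℝ (fun _ => X) ∞ n) ∘L
      (partialSumSeqs e).subtypeL ∘L (he.partialSums : X →L[ℝ] partialSumSeqs e)).codRestrict
      (ℝ ∙ e n) fun x => (he.partialSums x).2.2.2 n)

lemma coord_smul (n : ℕ) (x : X) :
    he.coord n x • e n =
      (he.partialSums x : ℓ^∞(ℕ, X)) (n + 1) - (he.partialSums x : ℓ^∞(ℕ, X)) n := by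
  have h := congr_arg Subtype.val (ContinuousLinearEquiv.toSpanNonzeroSingleton_coord ℝ
    (he.ne_zero n) (⟨_, (he.partialSums x).2.2.2 n⟩ : ℝ ∙ e n))
  rw [ContinuousLinearEquiv.toSpanNonzeroSingleton_apply_coe] at h
  exact h

lemma tendsto_sum_coord_smul (x : X) :
    Tendsto (fun N => ∑ n ∈ range N, he.coord n x • e n) atTop (𝓝 x) := by
  refine (he.tendsto_partialSums x).congr fun N => ?_
  simp only [coord_smul, sum_range_sub, (he.partialSums x).2.2.1, sub_zero]

lemma coord_apply_self (i j : ℕ) : he.coord i (e j) = (Pi.single j 1 : ℕ → ℝ) i :=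
  congr_fun ((he (e j)).unique (he.tendsto_sum_coord_smul (e j))
    (tendsto_sum_range_single_smul j)) i

/-- Mathlib's `SchauderBasis` carries continuous coordinate functionals; in a Banach space they
come for free. -/
noncomputable def toSchauderBasis : SchauderBasis ℝ X where
  basis := e
  coord := he.coord
  ortho i j := by simp [he.coord_apply_self, Pi.single_apply]
  expansion x := by
    rw [HasSum, SummationFilter.conditional_filter_eq_map_range, tendsto_map'_iff]
    exact he.tendsto_sum_coord_smul x

end IsSchauderBasis

lemma exists_seq_of_forall_exists {α : Type*} (a₀ : α) {r : ℕ → α → α → Prop}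
    (h : ∀ j a, ∃ b, r j a b) : ∃ f : ℕ → α, f 0 = a₀ ∧ ∀ j, r j (f j) (f (j + 1)) := by
  choose g hg using h
  exact ⟨fun j => Nat.rec a₀ g j, rfl, fun j => hg j _⟩

section BlockBasic

variable {X : Type*} [NormedAddCommGroup X] [NormedSpace ℝ X]

lemma isBlockBasic_sum_Ico (e : ℕ → X) {N : ℕ → ℕ} (hN : StrictMono N) (c : ℕ → ℕ → ℝ) :
    IsBlockBasic e fun j => ∑ n ∈ Ico (N j) (N (j + 1)), c j n • e n := by
  classical
  have huniq : ∀ {i j n}, n ∈ Ico (N i) (N (i + 1)) → n ∈ Ico (N j) (N (j + 1)) → i = j := by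
    intro i j n hi hj
    rw [mem_Ico] at hi hj
    by_contra hij
    rcases lt_or_gt_of_ne hij with h | h
    · have := hN.monotone (show i + 1 ≤ j by omega); omega
    · have := hN.monotone (show j + 1 ≤ i by omega); omega
  let a : ℕ → ℝ := fun n => if h : ∃ j, n ∈ Ico (N j) (N (j + 1)) then c h.choose n else 0
  refine ⟨fun j => Ico (N j) (N (j + 1)), a, fun j => nonempty_Ico.2 (hN j.lt_succ_self),
    fun j m hm k hk => (mem_Ico.1 hm).2.trans_le (mem_Ico.1 hk).1,
    fun j => sum_congr rfl fun n hn => ?_⟩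
  have h : ∃ i, n ∈ Ico (N i) (N (i + 1)) := ⟨j, hn⟩
  simp only [a, dif_pos h, huniq h.choose_spec hn]

end BlockBasic

namespace SchauderBasis

variable {X : Type*} [NormedAddCommGroup X] [NormedSpace ℝ X] (b : SchauderBasis ℝ X)

lemma exists_strictMono_tendsto_coord_sub {x : ℕ → X} {C : ℝ} (hx : ∀ k, ‖x k‖ ≤ C) :
    ∃ φ : ℕ → ℕ, StrictMono φ ∧
      ∀ n, Tendsto (fun j => b.coord n (x (φ (2 * j + 1)) - x (φ (2 * j)))) atTop (𝓝 0) := by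
  have hmem : ∀ k, (fun n => b.coord n (x k)) ∈
      Set.univ.pi fun n => Set.Icc (-(‖b.coord n‖ * C)) (‖b.coord n‖ * C) := fun k n _ =>
    abs_le.1 (((b.coord n).le_opNorm (x k)).trans (by gcongr; exact hx k))
  obtain ⟨L, -, φ, hφ, hL⟩ := (isCompact_univ_pi fun n => isCompact_Icc).tendsto_subseq hmem
  refine ⟨φ, hφ, fun n => ?_⟩
  have hn := tendsto_pi_nhds.1 hL n
  have hodd : StrictMono fun j : ℕ => 2 * j + 1 := fun i j h => by dsimp; omega
  have heven : StrictMono fun j : ℕ => 2 * j := fun i j h => by dsimp; omega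
  simpa using (hn.comp hodd.tendsto_atTop).sub (hn.comp heven.tendsto_atTop)

lemma tendsto_proj_of_tendsto_coord {y : ℕ → X}
    (hy : ∀ n, Tendsto (fun j => b.coord n (y j)) atTop (𝓝 0)) (N : ℕ) :
    Tendsto (fun j => b.proj N (y j)) atTop (𝓝 0) := by
  simpa using tendsto_finsetSum (range N) fun n _ => (hy n).smul_const (b n)

lemma exists_isBlockBasic_near {y : ℕ → X}
    (hy : ∀ n, Tendsto (fun j => b.coord n (y j)) atTop (𝓝 0)) {ε : ℕ → ℝ} (hε : ∀ j, 0 < ε j) :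
    ∃ k : ℕ → ℕ, StrictMono k ∧ ∃ u : ℕ → X, IsBlockBasic (⇑b) u ∧ ∀ j, ‖u j - y (k j)‖ < ε j := by
  -- gliding hump: `y (k j)` is `ε j`-close to its restriction to `[N j, N (j + 1))`
  have step : ∀ (j : ℕ) (p : ℕ × ℕ), ∃ p' : ℕ × ℕ, p.1 < p'.1 ∧ p.2 < p'.2 ∧
      ‖b.proj p.2 (y p'.1)‖ < ε j / 2 ∧ ‖y p'.1 - b.proj p'.2 (y p'.1)‖ < ε j / 2 := by
    rintro j ⟨k, N⟩
    have hhead := (b.tendsto_proj_of_tendsto_coord hy N).norm.eventually_lt_const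
      (show ‖(0 : X)‖ < ε j / 2 by rw [norm_zero]; exact half_pos (hε j))
    obtain ⟨k', hk', hk'small⟩ := ((eventually_gt_atTop k).and hhead).exists
    have htail := ((tendsto_const_nhds (x := y k')).sub (b.tendsto_proj (y k'))).norm
      |>.eventually_lt_const (show ‖y k' - y k'‖ < ε j / 2 by simpa using half_pos (hε j))
    obtain ⟨N', hN', hN'small⟩ := ((eventually_gt_atTop N).and htail).exists
    exact ⟨(k', N'), hk', hN', hk'small, hN'small⟩
  obtain ⟨f, -, hf⟩ := exists_seq_of_forall_exists (0, 0) step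
  set k : ℕ → ℕ := fun j => (f (j + 1)).1
  set N : ℕ → ℕ := fun j => (f j).2
  have hN : StrictMono N := strictMono_nat_of_lt_succ fun j => (hf j).2.1
  refine ⟨k, strictMono_nat_of_lt_succ fun j => (hf (j + 1)).1, _,
    isBlockBasic_sum_Ico b hN fun j n => b.coord n (y (k j)), fun j => ?_⟩
  have hblock : ∑ n ∈ Ico (N j) (N (j + 1)), b.coord n (y (k j)) • b n =
      b.proj (N (j + 1)) (y (k j)) - b.proj (N j) (y (k j)) := by
    rw [proj_apply, proj_apply, sum_Ico_eq_sub _ (hN.monotone j.le_succ)]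
  calc ‖∑ n ∈ Ico (N j) (N (j + 1)), b.coord n (y (k j)) • b n - y (k j)‖
      = ‖-(y (k j) - b.proj (N (j + 1)) (y (k j))) - b.proj (N j) (y (k j))‖ := by
        rw [hblock]; congr 1; abel
    _ ≤ ‖y (k j) - b.proj (N (j + 1)) (y (k j))‖ + ‖b.proj (N j) (y (k j))‖ := by
        rw [← norm_neg (y (k j) - _)]; exact norm_sub_le _ _
    _ < ε j / 2 + ε j / 2 := add_lt_add (hf j).2.2.2 (hf j).2.2.1
    _ = ε j := add_halves _

end SchauderBasis

section LqEstimates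

variable {E : Type*} [NormedAddCommGroup E] [NormedSpace ℝ E]

def HasLqEstimates (u : ℕ → E) (q c C : ℝ) : Prop :=
  ∀ (a : ℕ → ℝ) (s : Finset ℕ),
    c * (∑ j ∈ s, |a j| ^ q) ^ (1 / q) ≤ ‖∑ j ∈ s, a j • u j‖ ∧
    ‖∑ j ∈ s, a j • u j‖ ≤ C * (∑ j ∈ s, |a j| ^ q) ^ (1 / q)

lemma abs_le_sum_abs_rpow_rpow {q : ℝ} (hq : 0 < q) (a : ℕ → ℝ) {s : Finset ℕ} {j : ℕ}
    (hj : j ∈ s) : |a j| ≤ (∑ i ∈ s, |a i| ^ q) ^ (1 / q) := by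
  calc |a j| = (|a j| ^ q) ^ (1 / q) := by rw [one_div, Real.rpow_rpow_inv (abs_nonneg _) hq.ne']
    _ ≤ (∑ i ∈ s, |a i| ^ q) ^ (1 / q) := by
      gcongr
      exact single_le_sum (f := fun i => |a i| ^ q) (fun i _ => by positivity) hj

variable {u z : ℕ → E} {q c C : ℝ}

lemma HasLqEstimates.equivCanonLq (h : HasLqEstimates u q c C) (hc : 0 < c) :
    EquivCanonLq u q := by
  refine ⟨max (max C c⁻¹) 1, le_max_right _ _, fun a s => ?_⟩
  have hS : 0 ≤ (∑ j ∈ s, |a j| ^ q) ^ (1 / q) := by positivity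
  have hinv : (max (max C c⁻¹) 1)⁻¹ ≤ c :=
    inv_le_of_inv_le₀ hc ((le_max_right _ _).trans (le_max_left _ _))
  exact ⟨(mul_le_mul_of_nonneg_right hinv hS).trans (h a s).1,
    (h a s).2.trans (mul_le_mul_of_nonneg_right ((le_max_left _ _).trans (le_max_left _ _)) hS)⟩

lemma HasLqEstimates.of_sum_norm_sub_le (h : HasLqEstimates z q c C) (hq : 0 < q) {δ : ℝ}
    (hδ : ∀ s, ∑ j ∈ s, ‖u j - z j‖ ≤ δ) : HasLqEstimates u q (c - δ) (C + δ) := by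
  intro a s
  set S := (∑ j ∈ s, |a j| ^ q) ^ (1 / q)
  have hdiff : ‖∑ j ∈ s, a j • u j - ∑ j ∈ s, a j • z j‖ ≤ S * δ := by
    calc ‖∑ j ∈ s, a j • u j - ∑ j ∈ s, a j • z j‖
        = ‖∑ j ∈ s, a j • (u j - z j)‖ := by simp only [smul_sub, sum_sub_distrib]
      _ ≤ ∑ j ∈ s, |a j| * ‖u j - z j‖ := by
        simpa only [norm_smul, Real.norm_eq_abs] using norm_sum_le s fun j => a j • (u j - z j)
      _ ≤ ∑ j ∈ s, S * ‖u j - z j‖ := by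
        gcongr with j hj
        exact abs_le_sum_abs_rpow_rpow hq a hj
      _ ≤ S * δ := by rw [← mul_sum]; exact mul_le_mul_of_nonneg_left (hδ s) (by positivity)
  have h1 := norm_sub_norm_le (∑ j ∈ s, a j • u j) (∑ j ∈ s, a j • z j)
  have h2 := norm_sub_norm_le (∑ j ∈ s, a j • z j) (∑ j ∈ s, a j • u j)
  rw [norm_sub_rev] at h2
  constructor <;> linarith [(h a s).1, (h a s).2]

lemma HasLqEstimates.map {F : Type*} [NormedAddCommGroup F] [NormedSpace ℝ F] {w : ℕ → E}
    (h : HasLqEstimates w q c C) (J : E →ₗ[ℝ] F) {c' C' : ℝ} (hc' : 0 ≤ c') (hC' : 0 ≤ C')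
    (hJ : ∀ f, ‖J f‖ ≤ C' * ‖f‖ ∧ c' * ‖f‖ ≤ ‖J f‖) :
    HasLqEstimates (fun j => J (w j)) q (c' * c) (C' * C) := by
  intro a s
  have hsum : ∑ j ∈ s, a j • J (w j) = J (∑ j ∈ s, a j • w j) := by simp [map_sum]
  rw [hsum, mul_assoc, mul_assoc]
  exact ⟨(mul_le_mul_of_nonneg_left (h a s).1 hc').trans (hJ _).2,
    (hJ _).1.trans (mul_le_mul_of_nonneg_left (h a s).2 hC')⟩

end LqEstimates

lemma lp.norm_sum_single_comp_rpow {α ι E : Type*} [DecidableEq α] [NormedAddCommGroup E]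
    {p : ℝ≥0∞} (hp : 0 < p.toReal) {ρ : ι → α} (hρ : Function.Injective ρ) (f : ι → E)
    (t : Finset ι) :
    ‖∑ i ∈ t, (lp.single p (ρ i) (f i) : ℓ^p(α, E))‖ ^ p.toReal = ∑ i ∈ t, ‖f i‖ ^ p.toReal := by
  have h := lp.norm_sum_single (E := fun _ : α => E) hp (Function.extend ρ f 0) (t.image ρ)
  rw [sum_image hρ.injOn, sum_image hρ.injOn] at h
  simpa [hρ.extend_apply] using h

lemma hasLqEstimates_single_sub_single {p : ℝ≥0∞} [Fact (1 ≤ p)] (hp : p ≠ ∞) {σ τ : ℕ → ℕ}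
    (hστ : Function.Injective (Sum.elim σ τ)) :
    HasLqEstimates (fun j => (lp.single p (τ j) 1 - lp.single p (σ j) 1 : ℓ^p(ℕ, ℝ)))
      p.toReal 1 2 := by
  set r := p.toReal
  have hr : 1 ≤ r := by simpa using ENNReal.toReal_mono hp (Fact.out : 1 ≤ p)
  intro a s
  set S := ∑ j ∈ s, |a j| ^ r
  have hvec : ∑ j ∈ s, a j • (lp.single p (τ j) 1 - lp.single p (σ j) 1 : ℓ^p(ℕ, ℝ)) =
      ∑ i ∈ s.disjSum s, lp.single p (Sum.elim σ τ i) (Sum.elim (-a) a i) := by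
    simp [sum_disjSum, smul_sub, ← lp.single_smul, sum_sub_distrib]
    abel
  have hnorm : ‖∑ j ∈ s, a j • (lp.single p (τ j) 1 - lp.single p (σ j) 1 : ℓ^p(ℕ, ℝ))‖ =
      2 ^ (1 / r) * S ^ (1 / r) := by
    rw [← Real.mul_rpow zero_le_two (by positivity),
      ← Real.rpow_rpow_inv (norm_nonneg _) (by positivity : r ≠ 0), one_div, hvec,
      lp.norm_sum_single_comp_rpow (by positivity) hστ, sum_disjSum]
    simp [S, r, two_mul]
  have h2 : (2 : ℝ) ^ (1 / r) ≤ 2 := by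
    simpa using Real.rpow_le_rpow_of_exponent_le one_le_two (div_le_one_of_le₀ hr (by positivity))
  have h1 : (1 : ℝ) ≤ 2 ^ (1 / r) := Real.one_le_rpow one_le_two (by positivity)
  rw [hnorm]
  exact ⟨by gcongr, by gcongr⟩

theorem statement2 {X : Type*} [NormedAddCommGroup X] [NormedSpace ℝ X] [CompleteSpace X]
    (q : ℝ) (hq : 1 ≤ q) (e : ℕ → X) (he : IsSchauderBasis e)
    (hcopy : ContainsLp X q) :
    ∃ u : ℕ → X, IsBlockBasic e u ∧ EquivCanonLq u q := by
  obtain ⟨J, C, c, hc, hJ⟩ := hcopy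
  have : Fact (1 ≤ ENNReal.ofReal q) := ⟨by simpa using hq⟩
  let δ : ℕ → ℓ^(ENNReal.ofReal q)(ℕ, ℝ) := fun k => lp.single _ k 1
  have hδ : ∀ k, ‖δ k‖ = 1 := fun k => by
    simp [δ, lp.norm_single (ENNReal.ofReal_pos.2 (by linarith : (0 : ℝ) < q))]
  have hcC : c ≤ C := by simpa [hδ] using (hJ (δ 0)).2.trans (hJ (δ 0)).1
  obtain ⟨φ, hφ, hnull⟩ := he.toSchauderBasis.exists_strictMono_tendsto_coord_sub
    (x := fun k => J (δ k)) fun k => by simpa [hδ] using (hJ (δ k)).1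
  obtain ⟨k, hk, u, hu, hclose⟩ := he.toSchauderBasis.exists_isBlockBasic_near hnull
    (ε := fun j => c / 2 / 2 / 2 ^ j) fun j => by positivity
  have hinj : Function.Injective (Sum.elim (fun j => φ (2 * k j)) fun j => φ (2 * k j + 1)) :=
    .sumElim (hφ.injective.comp fun i j h => hk.injective (by simp at h; omega))
      (hφ.injective.comp fun i j h => hk.injective (by simp at h; omega))
      fun i j => hφ.injective.ne (by omega)
  have hz := (hasLqEstimates_single_sub_single ENNReal.ofReal_ne_top hinj).map J hc.le
    (hc.le.trans hcC) hJ
  rw [ENNReal.toReal_ofReal (by linarith)] at hz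
  refine ⟨u, hu, (hz.of_sum_norm_sub_le (δ := c / 2) (by linarith) fun s => ?_).equivCanonLq
    (by linarith)⟩
  calc ∑ j ∈ s, ‖u j - J (δ (φ (2 * k j + 1)) - δ (φ (2 * k j)))‖
      ≤ ∑ j ∈ s, c / 2 / 2 / 2 ^ j := sum_le_sum fun j _ => by simpa using (hclose j).le
    _ ≤ c / 2 := ((summable_geometric_two' _).sum_le_tsum s fun j _ => by positivity).trans_eq
        (tsum_geometric_two' _)
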